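/- arXiv:2410.21634 — 7 statements merged into one kernel-verified Lean document; each statement's English description precedes it below -/
import Mathlib

section
/- Let G be a finite undirected graph without isolated vertices, with adjacency matrix A and degree matrix D, and let α ∈ (0,1). Define the personalized PageRank vector of source node s as f_s = α(I − (1−α)AD^{-1})^{-1} e_s. Then for any two vertices u, v: d_u · f_u[v] = d_v · f_v[u]. -/
open Matrix

/-- Symmetry of personalized PageRank: for an undirected graph without isolated vertices,
with `f_s = α (I - (1-α) A D⁻¹)⁻¹ e_s`, we have `d_u · f_u[v] = d_v · f_v[u]`. -/
theorem ppr_symmetry (n : ℕ) (G : SimpleGraph (Fin n)) [DecidableRel G.Adj]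
    (hdeg : ∀ v, 0 < G.degree v) (α : ℝ) (hα : 0 < α) (hα1 : α < 1)
    (Q : Matrix (Fin n) (Fin n) ℝ)
    (hQ : Q = 1 - (1 - α) •
      (G.adjMatrix ℝ * (Matrix.diagonal fun v => (G.degree v : ℝ))⁻¹))
    (hQu : IsUnit Q)
    (f : Fin n → Fin n → ℝ)
    (hf : ∀ s, f s = α • (Q⁻¹ *ᵥ Pi.single s 1))
    (u v : Fin n) :
    (G.degree u : ℝ) * f u v = (G.degree v : ℝ) * f v u := by
  set d : Fin n → ℝ := fun v => (G.degree v : ℝ) with hd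
  set D : Matrix (Fin n) (Fin n) ℝ := Matrix.diagonal d with hD
  have hdne : ∀ w, d w ≠ 0 := fun w => by
    simpa [hd] using (hdeg w).ne'
  have hDu : IsUnit D := by
    rw [hD, Matrix.isUnit_diagonal]
    exact IsUnit.of_mul_eq_one (fun w => (d w)⁻¹)
      (funext fun w => mul_inv_cancel₀ (hdne w))
  have hDdet : IsUnit D.det := (Matrix.isUnit_iff_isUnit_det D).mp hDu
  have hQdet : IsUnit Q.det := (Matrix.isUnit_iff_isUnit_det Q).mp hQu
  have hMsymm : (D⁻¹ * Q)ᵀ = D⁻¹ * Q := by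
    rw [hQ, hD]
    simp only [Matrix.mul_sub, Matrix.mul_one, Matrix.mul_smul, Matrix.transpose_sub,
      Matrix.transpose_smul, Matrix.transpose_mul, Matrix.transpose_nonsing_inv,
      Matrix.diagonal_transpose, SimpleGraph.transpose_adjMatrix, ← Matrix.mul_assoc]
  have hinv : (D⁻¹ * Q)⁻¹ = Q⁻¹ * D := by
    rw [Matrix.mul_inv_rev, Matrix.nonsing_inv_nonsing_inv D hDdet]
  have hsym : (Q⁻¹ * D)ᵀ = Q⁻¹ * D := by
    rw [← hinv, Matrix.transpose_nonsing_inv, hMsymm]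
  have key : (Q⁻¹ * D) v u = (Q⁻¹ * D) u v := by
    conv_lhs => rw [← hsym]
    rw [Matrix.transpose_apply]
  have hfval : ∀ s t, f s t = α * Q⁻¹ t s := by
    intro s t
    simp [hf, Matrix.mulVec, dotProduct, Pi.single_apply,
      Finset.sum_ite_eq', mul_comm]
  have hentry : ∀ s t, (Q⁻¹ * D) t s = Q⁻¹ t s * d s := by
    intro s t
    rw [hD, Matrix.mul_diagonal]
  have h1 := hentry u v
  have h2 := hentry v u
  rw [hfval u v, hfval v u]
  have : Q⁻¹ v u * d u = Q⁻¹ u v * d v := by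
    rw [← h1, ← h2, key]
  calc d u * (α * Q⁻¹ v u) = α * (Q⁻¹ v u * d u) := by ring
    _ = α * (Q⁻¹ u v * d v) := by rw [this]
    _ = d v * (α * Q⁻¹ u v) := by ring
end

section
/- Let Q = I − βP with P ≥ 0 entrywise with zero diagonal, β ≥ 0, ω ∈ (0,1], and suppose β·||P e_u||_1 ≤ 1 for all u. If r ≥ 0 entrywise and r' = r − ω r_u Q e_u for some coordinate u, then ||r'||_1 ≤ ||r||_1. -/
/-!
For `r ≥ 0` the LocalSOR step keeps the residual nonnegative: the diagonal entry `r_u` is scaled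
by `1 - ω ≥ 0` (as `P u u = 0`) and every other entry only grows (as `P, β, ω ≥ 0`). On
nonnegative vectors the ℓ1 norm is the coordinate sum, which the step decreases by
`ω r_u (1 - β ∑ᵢ P i u) ≥ 0`.
-/

open Matrix

theorem sum_abs_sub_smul_le_sum_abs {ι : Type*} [Fintype ι] {x q : ι → ℝ} {c : ℝ}
    (hx : 0 ≤ x) (hxq : 0 ≤ x - c • q) (hc : 0 ≤ c) (hq : 0 ≤ ∑ i, q i) :
    ∑ i, |(x - c • q) i| ≤ ∑ i, |x i| :=
  calc ∑ i, |(x - c • q) i| = ∑ i, (x - c • q) i := by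
        simp only [abs_of_nonneg (hxq _ : 0 ≤ (x - c • q) _)]
    _ = ∑ i, x i - c * ∑ i, q i := by
        simp only [Pi.sub_apply, Pi.smul_apply, smul_eq_mul, Finset.sum_sub_distrib,
          Finset.mul_sum]
    _ ≤ ∑ i, x i := sub_le_self _ (mul_nonneg hc hq)
    _ = ∑ i, |x i| := by simp only [abs_of_nonneg (hx _ : 0 ≤ x _)]

section LocalSOR

variable {ι R : Type*} [Fintype ι] [DecidableEq ι]

theorem one_sub_smul_mulVec_single_one_apply [Ring R] (β : R) (P : Matrix ι ι R) (u i : ι) :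
    ((1 - β • P) *ᵥ Pi.single u 1) i = (1 : Matrix ι ι R) i u - β * P i u := by
  simp

theorem sum_one_sub_smul_mulVec_single_one [Ring R] (β : R) (P : Matrix ι ι R) (u : ι) :
    ∑ i, ((1 - β • P) *ᵥ Pi.single u 1) i = 1 - β * ∑ i, P i u := by
  simp [one_sub_smul_mulVec_single_one_apply, Finset.sum_sub_distrib, Finset.mul_sum,
    one_apply]

theorem localSOR_step_nonneg {P : Matrix ι ι ℝ} (hP : ∀ i j, 0 ≤ P i j)
    (hdiag : ∀ i, P i i = 0) {β ω : ℝ} (hβ : 0 ≤ β) (hω0 : 0 ≤ ω) (hω1 : ω ≤ 1)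
    {r : ι → ℝ} (hr : 0 ≤ r) (u : ι) :
    0 ≤ r - (ω * r u) • ((1 - β • P) *ᵥ Pi.single u 1) := by
  intro i
  rw [Pi.zero_apply, Pi.sub_apply, Pi.smul_apply, smul_eq_mul,
    one_sub_smul_mulVec_single_one_apply]
  rcases eq_or_ne i u with rfl | hiu
  · rw [one_apply_eq, hdiag, mul_zero, sub_zero, mul_one]
    linarith [mul_nonneg (sub_nonneg.2 hω1) (hr i : 0 ≤ r i)]
  · rw [one_apply_ne hiu, zero_sub, mul_neg, sub_neg_eq_add]
    exact add_nonneg (hr i) (mul_nonneg (mul_nonneg hω0 (hr u)) (mul_nonneg hβ (hP i u)))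

end LocalSOR

/-- One LocalSOR coordinate update does not increase the ℓ1 norm of the residual:
with `Q = I - βP`, `P ≥ 0` with zero diagonal, `β ≥ 0`, `ω ∈ (0,1]`,
`β·‖P e_u‖₁ ≤ 1` for every column, if `r ≥ 0` and `r' = r - ω r_u (Q e_u)`
then `‖r'‖₁ ≤ ‖r‖₁`. -/
theorem localSOR_step_monotone (n : ℕ) (P : Matrix (Fin n) (Fin n) ℝ)
    (hP : ∀ i j, 0 ≤ P i j) (hdiag : ∀ i, P i i = 0)
    (β : ℝ) (hβ : 0 ≤ β) (ω : ℝ) (hω0 : 0 < ω) (hω1 : ω ≤ 1)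
    (hcol : ∀ u, β * ∑ i, P i u ≤ 1)
    (r : Fin n → ℝ) (hr : ∀ i, 0 ≤ r i) (u : Fin n)
    (r' : Fin n → ℝ)
    (hr' : r' = r - (ω * r u) • ((1 - β • P) *ᵥ Pi.single u 1)) :
    (∑ i, |r' i|) ≤ ∑ i, |r i| := by
  have hcol_sum : 0 ≤ ∑ i, ((1 - β • P) *ᵥ Pi.single u 1) i := by
    rw [sum_one_sub_smul_mulVec_single_one]
    linarith [hcol u]
  subst hr'
  exact sum_abs_sub_smul_le_sum_abs hr (localSOR_step_nonneg hP hdiag hβ hω0.le hω1 hr u)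
    (mul_nonneg hω0.le (hr u)) hcol_sum
end

section
/- Let Q = I − βP with P ≥ 0 entrywise with zero diagonal, β ≥ 0, ω ∈ (0,1], and let P_max = max_u ||P e_u||_1 with β·P_max < 1. If r ≥ 0 entrywise and r' = r − ω r_u Q e_u, then ||r'||_1 = ||r||_1 − ω r_u (1 − β||P e_u||_1), and in particular ||r'||_1 ≤ ||r||_1 − ω r_u (1 − β P_max). -/
/-!
Because `P` has zero diagonal, the update lowers only the `u`-th entry, to `(1 - ω) r_u ≥ 0`, and
raises every other entry `i` by `ω β r_u P_{iu} ≥ 0`. So `r'` stays nonnegative, its ℓ1 norm is its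
plain sum, and the sum is linear in the update: the mass `ω r_u` leaves coordinate `u` and
`ω β r_u ‖P e_u‖₁` flows back in. Bounding the column sum `‖P e_u‖₁` by `P_max` gives the inequality.
-/

open Matrix

section

variable {ι R : Type*} [Fintype ι] [DecidableEq ι]

def localSORStep [CommRing R] (P : Matrix ι ι R) (β ω : R) (u : ι) (r : ι → R) : ι → R :=
  r - (ω * r u) • ((1 - β • P) *ᵥ Pi.single u 1)

theorem one_sub_smul_mulVec_single [CommRing R] (P : Matrix ι ι R) (β : R) (u : ι) :
    (1 - β • P) *ᵥ Pi.single u 1 = Pi.single u 1 - β • P.col u := by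
  rw [sub_mulVec, one_mulVec, smul_mulVec, mulVec_single_one]

theorem localSORStep_apply [CommRing R] (P : Matrix ι ι R) (β ω : R) (u : ι) (r : ι → R)
    (i : ι) :
    localSORStep P β ω u r i =
      r i - ω * r u * (Pi.single u 1 : ι → R) i + ω * r u * β * P i u := by
  simp only [localSORStep, one_sub_smul_mulVec_single, Pi.sub_apply, Pi.smul_apply, col_apply,
    smul_eq_mul]
  ring

theorem sum_localSORStep [CommRing R] (P : Matrix ι ι R) (β ω : R) (u : ι) (r : ι → R) :
    ∑ i, localSORStep P β ω u r i = ∑ i, r i - ω * r u * (1 - β * ∑ i, P i u) := by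
  simp only [localSORStep_apply, Finset.sum_add_distrib, Finset.sum_sub_distrib, ← Finset.mul_sum,
    Finset.sum_pi_single', if_pos (Finset.mem_univ u)]
  ring

variable [CommRing R] [LinearOrder R] [IsStrictOrderedRing R]

theorem localSORStep_nonneg {P : Matrix ι ι R} (hP : ∀ i j, 0 ≤ P i j) (hdiag : ∀ i, P i i = 0)
    {β ω : R} (hβ : 0 ≤ β) (hω0 : 0 ≤ ω) (hω1 : ω ≤ 1) (u : ι) {r : ι → R} (hr : ∀ i, 0 ≤ r i)
    (i : ι) : 0 ≤ localSORStep P β ω u r i := by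
  rw [localSORStep_apply]
  rcases eq_or_ne i u with rfl | hiu
  · simp only [Pi.single_eq_same, hdiag, mul_one, mul_zero, add_zero]
    calc (0 : R) ≤ (1 - ω) * r i := mul_nonneg (sub_nonneg.mpr hω1) (hr i)
      _ = r i - ω * r i := by ring
  · simp only [Pi.single_eq_of_ne hiu, mul_zero, sub_zero]
    exact add_nonneg (hr i) (mul_nonneg (mul_nonneg (mul_nonneg hω0 (hr u)) hβ) (hP i u))

theorem sum_abs_localSORStep {P : Matrix ι ι R} (hP : ∀ i j, 0 ≤ P i j)
    (hdiag : ∀ i, P i i = 0) {β ω : R} (hβ : 0 ≤ β) (hω0 : 0 ≤ ω) (hω1 : ω ≤ 1) (u : ι)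
    {r : ι → R} (hr : ∀ i, 0 ≤ r i) :
    ∑ i, |localSORStep P β ω u r i| = ∑ i, |r i| - ω * r u * (1 - β * ∑ i, P i u) := by
  simp only [abs_of_nonneg (localSORStep_nonneg hP hdiag hβ hω0 hω1 u hr _), abs_of_nonneg (hr _)]
  exact sum_localSORStep P β ω u r

end

theorem localSOR_step_decrease_general (n : ℕ) (P : Matrix (Fin n) (Fin n) ℝ)
    (hP : ∀ i j, 0 ≤ P i j) (hdiag : ∀ i, P i i = 0)
    (β : ℝ) (hβ : 0 ≤ β) (ω : ℝ) (hω0 : 0 < ω) (hω1 : ω ≤ 1)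
    (u : Fin n) (Pmax : ℝ)
    (hPmax : Pmax = Finset.univ.sup' ⟨u, Finset.mem_univ u⟩ (fun v => ∑ i, P i v))
    (r : Fin n → ℝ) (hr : ∀ i, 0 ≤ r i)
    (r' : Fin n → ℝ)
    (hr' : r' = r - (ω * r u) • ((1 - β • P) *ᵥ Pi.single u 1)) :
    (∑ i, |r' i|) = (∑ i, |r i|) - ω * r u * (1 - β * ∑ i, P i u) ∧
    (∑ i, |r' i|) ≤ (∑ i, |r i|) - ω * r u * (1 - β * Pmax) := by
  have hstep : r' = localSORStep P β ω u r := hr'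
  have hl1 := hstep ▸ sum_abs_localSORStep hP hdiag hβ hω0.le hω1 u hr
  have hcol : ∑ i, P i u ≤ Pmax := hPmax ▸ Finset.le_sup' (fun v => ∑ i, P i v) (Finset.mem_univ u)
  refine ⟨hl1, hl1 ▸ ?_⟩
  have hmass : 0 ≤ ω * r u := mul_nonneg hω0.le (hr u)
  gcongr

/-- Exact ℓ1 decrease of one LocalSOR coordinate update:
`‖r'‖₁ = ‖r‖₁ - ω r_u (1 - β‖P e_u‖₁) ≤ ‖r‖₁ - ω r_u (1 - β P_max)`,
where `P_max = max_u ‖P e_u‖₁`. -/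
theorem localSOR_step_decrease (n : ℕ) (P : Matrix (Fin n) (Fin n) ℝ)
    (hP : ∀ i j, 0 ≤ P i j) (hdiag : ∀ i, P i i = 0)
    (β : ℝ) (hβ : 0 ≤ β) (ω : ℝ) (hω0 : 0 < ω) (hω1 : ω ≤ 1)
    (u : Fin n) (Pmax : ℝ)
    (hPmax : Pmax = Finset.univ.sup' ⟨u, Finset.mem_univ u⟩ (fun v => ∑ i, P i v))
    (hβP : β * Pmax < 1)
    (r : Fin n → ℝ) (hr : ∀ i, 0 ≤ r i)
    (r' : Fin n → ℝ)
    (hr' : r' = r - (ω * r u) • ((1 - β • P) *ᵥ Pi.single u 1)) :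
    (∑ i, |r' i|) = (∑ i, |r i|) - ω * r u * (1 - β * ∑ i, P i u) ∧
    (∑ i, |r' i|) ≤ (∑ i, |r i|) - ω * r u * (1 - β * Pmax) :=
  localSOR_step_decrease_general n P hP hdiag β hβ ω hω0 hω1 u Pmax hPmax r hr r' hr'
end

section
/- Let Q = I − βP with P ≥ 0 entrywise, β ≥ 0, and P_max = sup over nonzero nonnegative vectors v of ||Pv||_1/||v||_1 satisfying β·P_max < 1. Suppose r ≥ 0 entrywise and r' = r − Q·r_S, where r_S is the restriction of r to a subset S of coordinates (r_S agrees with r on S and is 0 outside S). Then r' ≥ 0 entrywise and ||r'||_1 = ||r||_1 − ||r_S||_1 + β||P r_S||_1 ≤ (1 − γ(1 − βP_max))||r||_1, where γ = ||r_S||_1/||r||_1. -/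
/-!
Entrywise, `r' = (r - r_S) + β P r_S` is a sum of nonnegative vectors, because `r_S ≤ r` and
`P ≥ 0`. On the nonnegative cone the `ℓ¹` norm is just the sum of the entries, hence additive,
which gives the identity for `‖r'‖₁`. The bound follows from `‖P r_S‖₁ ≤ P_max ‖r_S‖₁` and
`γ ‖r‖₁ = ‖r_S‖₁`.
-/

open Matrix Finset

lemma Finset.sum_abs_of_nonneg {ι α : Type*} [AddCommGroup α] [LinearOrder α]
    [IsOrderedAddMonoid α] (s : Finset ι) {v : ι → α} (hv : 0 ≤ v) :
    ∑ i ∈ s, |v i| = ∑ i ∈ s, v i :=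
  sum_congr rfl fun i _ => abs_of_nonneg (hv i)

lemma Matrix.mulVec_nonneg {m n R : Type*} [Fintype n] [Semiring R] [PartialOrder R]
    [IsOrderedRing R] {A : Matrix m n R} (hA : ∀ i j, 0 ≤ A i j) {v : n → R} (hv : 0 ≤ v) :
    0 ≤ A *ᵥ v :=
  fun i => sum_nonneg fun j _ => mul_nonneg (hA i j) (hv j)

lemma Matrix.sub_one_sub_smul_mulVec {n R : Type*} [Fintype n] [DecidableEq n] [CommRing R]
    (P : Matrix n n R) (β : R) (r x : n → R) :
    r - (1 - β • P) *ᵥ x = r - x + β • (P *ᵥ x) := by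
  rw [sub_mulVec, one_mulVec, smul_mulVec]
  abel

lemma sum_abs_sub_add_smul {ι : Type*} [Fintype ι] {v w u : ι → ℝ} (hw : 0 ≤ w) (hwv : w ≤ v)
    (hu : 0 ≤ u) {β : ℝ} (hβ : 0 ≤ β) :
    ∑ i, |(v - w + β • u) i| = ∑ i, |v i| - ∑ i, |w i| + β * ∑ i, |u i| := by
  have hv : 0 ≤ v := hw.trans hwv
  have hsum : 0 ≤ v - w + β • u := add_nonneg (sub_nonneg.2 hwv) (smul_nonneg hβ hu)
  rw [sum_abs_of_nonneg _ hsum, sum_abs_of_nonneg _ hv, sum_abs_of_nonneg _ hw,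
    sum_abs_of_nonneg _ hu, mul_sum, ← sum_sub_distrib, ← sum_add_distrib]
  rfl

lemma sub_add_mul_le_one_sub_div_mul_mul {a b c β p : ℝ} (hb : 0 ≤ b) (hba : b ≤ a)
    (hβ : 0 ≤ β) (hc : c ≤ p * b) :
    a - b + β * c ≤ (1 - b / a * (1 - β * p)) * a := by
  have hγ : b / a * a = b := div_mul_cancel_of_imp fun ha => by linarith
  have hβc : β * c ≤ β * (p * b) := mul_le_mul_of_nonneg_left hc hβ
  linear_combination hβc + (1 - β * p) * hγ

theorem localGD_step_general (n : ℕ) (P : Matrix (Fin n) (Fin n) ℝ)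
    (hP : ∀ i j, 0 ≤ P i j) (β : ℝ) (hβ : 0 ≤ β)
    (Pmax : ℝ)
    (hPmax : ∀ v : Fin n → ℝ, (∀ i, 0 ≤ v i) →
      ∑ i, |(P *ᵥ v) i| ≤ Pmax * ∑ i, |v i|)
    (r : Fin n → ℝ) (hr : ∀ i, 0 ≤ r i)
    (S : Finset (Fin n)) (rS : Fin n → ℝ)
    (hrS : ∀ i, rS i = if i ∈ S then r i else 0)
    (r' : Fin n → ℝ) (hr' : r' = r - (1 - β • P) *ᵥ rS) :
    (∀ i, 0 ≤ r' i) ∧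
    (∑ i, |r' i|) = (∑ i, |r i|) - (∑ i, |rS i|) + β * ∑ i, |(P *ᵥ rS) i| ∧
    (∑ i, |r' i|) ≤
      (1 - ((∑ i, |rS i|) / (∑ i, |r i|)) * (1 - β * Pmax)) * ∑ i, |r i| := by
  have hrS_nonneg : 0 ≤ rS := fun i => by rw [hrS]; split_ifs <;> simp [hr i]
  have hrS_le : rS ≤ r := fun i => by rw [hrS]; split_ifs <;> simp [hr i]
  have hPrS : 0 ≤ P *ᵥ rS := mulVec_nonneg hP hrS_nonneg
  rw [sub_one_sub_smul_mulVec] at hr'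
  subst hr'
  have hnorm := sum_abs_sub_add_smul hrS_nonneg hrS_le hPrS hβ
  refine ⟨add_nonneg (sub_nonneg.2 hrS_le) (smul_nonneg hβ hPrS), hnorm, ?_⟩
  rw [hnorm]
  exact sub_add_mul_le_one_sub_div_mul_mul (sum_nonneg fun i _ => abs_nonneg _)
    (sum_le_sum fun i _ => abs_le_abs_of_nonneg (hrS_nonneg i) (hrS_le i)) hβ
    (hPmax rS hrS_nonneg)

/-- One step of LocalGD: with `Q = I - βP`, `P ≥ 0` entrywise, `β ≥ 0`,
`P_max` bounding `‖Pv‖₁/‖v‖₁` over nonnegative `v` with `β P_max < 1`,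
`r ≥ 0`, `r ≠ 0`, and `r' = r - Q r_S` (`r_S` the restriction of `r` to `S`),
we have `r' ≥ 0`, `‖r'‖₁ = ‖r‖₁ - ‖r_S‖₁ + β‖P r_S‖₁`, and
`‖r'‖₁ ≤ (1 - γ(1 - β P_max))‖r‖₁` with `γ = ‖r_S‖₁/‖r‖₁`. -/
theorem localGD_step (n : ℕ) (P : Matrix (Fin n) (Fin n) ℝ)
    (hP : ∀ i j, 0 ≤ P i j) (β : ℝ) (hβ : 0 ≤ β)
    (Pmax : ℝ)
    (hPmax : ∀ v : Fin n → ℝ, (∀ i, 0 ≤ v i) →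
      ∑ i, |(P *ᵥ v) i| ≤ Pmax * ∑ i, |v i|)
    (hβP : β * Pmax < 1)
    (r : Fin n → ℝ) (hr : ∀ i, 0 ≤ r i) (hr0 : r ≠ 0)
    (S : Finset (Fin n)) (rS : Fin n → ℝ)
    (hrS : ∀ i, rS i = if i ∈ S then r i else 0)
    (r' : Fin n → ℝ) (hr' : r' = r - (1 - β • P) *ᵥ rS) :
    (∀ i, 0 ≤ r' i) ∧
    (∑ i, |r' i|) = (∑ i, |r i|) - (∑ i, |rS i|) + β * ∑ i, |(P *ᵥ rS) i| ∧
    (∑ i, |r' i|) ≤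
      (1 - ((∑ i, |rS i|) / (∑ i, |r i|)) * (1 - β * Pmax)) * ∑ i, |r i| :=
  localGD_step_general n P hP β hβ Pmax hPmax r hr S rS hrS r' hr'
end

section
/- Under the LocalGD iteration r^{(t+1)} = r^{(t)} − Q r_{S_t}^{(t)} with Q = I − βP, P ≥ 0, βP_max < 1, r^{(0)} ≥ 0, and r^{(T)} ≠ 0, if γ_t = ||r_{S_t}^{(t)}||_1/||r^{(t)}||_1 and γ̄_T = (1/T)Σ_{t=0}^{T-1} γ_t > 0, then T ≤ (1/(γ̄_T(1 − βP_max))) · ln(||r^{(0)}||_1/||r^{(T)}||_1). -/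
/-!
Since `P ≥ 0` the iterates stay nonnegative, so `‖·‖₁` is the plain sum of the entries. A step
removes the active mass `‖r_S‖₁` and adds back at most `β P_max ‖r_S‖₁` through `βP`, hence
`‖r^{(t+1)}‖₁ ≤ (1 - γ_t (1 - β P_max)) ‖r^{(t)}‖₁`. Taking logarithms, `ln (1 - x) ≤ -x` and
telescoping over `t < T` give `T γ̄_T (1 - β P_max) ≤ ln (‖r^{(0)}‖₁ / ‖r^{(T)}‖₁)`.
-/

open Matrix Finset

theorem Real.log_sub_log_le_sub_one {x y a : ℝ} (hx : 0 < x) (hy : 0 < y) (hyx : y ≤ a * x) :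
    Real.log y - Real.log x ≤ a - 1 := by
  rw [← Real.log_div hy.ne' hx.ne']
  calc Real.log (y / x) ≤ y / x - 1 := Real.log_le_sub_one_of_pos (div_pos hy hx)
    _ ≤ a - 1 := by gcongr; exact (div_le_iff₀ hx).2 hyx

theorem sum_range_le_log_div_of_le_one_sub_mul {N d : ℕ → ℝ} {T : ℕ}
    (hN : ∀ t ≤ T, 0 < N t) (hstep : ∀ t < T, N (t + 1) ≤ (1 - d t) * N t) :
    ∑ t ∈ range T, d t ≤ Real.log (N 0 / N T) := by
  have hlog : ∀ t ∈ range T, Real.log (N (t + 1)) - Real.log (N t) ≤ -d t := fun t ht => by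
    have ht := mem_range.1 ht
    simpa using Real.log_sub_log_le_sub_one (hN t ht.le) (hN (t + 1) ht) (hstep t ht)
  have := (sum_range_sub (fun t => Real.log (N t)) T).symm.trans_le (sum_le_sum hlog)
  rw [Real.log_div (hN 0 T.zero_le).ne' (hN T le_rfl).ne', sum_neg_distrib] at *
  linarith

theorem Matrix.mulVec_nonneg_of_nonneg {ι : Type*} [Fintype ι] {P : Matrix ι ι ℝ} {v : ι → ℝ}
    (hP : ∀ i j, 0 ≤ P i j) (hv : ∀ j, 0 ≤ v j) (i : ι) : 0 ≤ (P *ᵥ v) i :=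
  dotProduct_nonneg_of_nonneg (hP i) hv

section LocalGD

variable {ι : Type*} [Fintype ι] [DecidableEq ι]

def localGDStep (P : Matrix ι ι ℝ) (β : ℝ) (S : Finset ι) (r : ι → ℝ) : ι → ℝ :=
  r - (1 - β • P) *ᵥ fun i => if i ∈ S then r i else 0

variable {P : Matrix ι ι ℝ} {β : ℝ} {S : Finset ι} {r : ι → ℝ}

theorem localGDStep_apply (i : ι) :
    localGDStep P β S r i =
      (if i ∈ S then 0 else r i) + β * (P *ᵥ fun j => if j ∈ S then r j else 0) i := by
  simp only [localGDStep, Pi.sub_apply, sub_mulVec, one_mulVec, smul_mulVec, Pi.smul_apply,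
    smul_eq_mul]
  split_ifs <;> ring

theorem localGDStep_nonneg (hP : ∀ i j, 0 ≤ P i j) (hβ : 0 ≤ β) (hr : ∀ i, 0 ≤ r i) (i : ι) :
    0 ≤ localGDStep P β S r i := by
  have hv : ∀ j, 0 ≤ if j ∈ S then r j else 0 := fun j => ite_nonneg (hr j) le_rfl
  rw [localGDStep_apply]
  have := mul_nonneg hβ (mulVec_nonneg_of_nonneg hP hv i)
  split_ifs <;> linarith [hr i]

theorem sum_localGDStep_le {Pmax : ℝ} (hP : ∀ i j, 0 ≤ P i j) (hβ : 0 ≤ β)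
    (hPmax : ∀ v : ι → ℝ, (∀ i, 0 ≤ v i) → ∑ i, |(P *ᵥ v) i| ≤ Pmax * ∑ i, |v i|)
    (hr : ∀ i, 0 ≤ r i) :
    ∑ i, localGDStep P β S r i ≤ ∑ i, r i - (1 - β * Pmax) * ∑ i ∈ S, r i := by
  set v : ι → ℝ := fun j => if j ∈ S then r j else 0
  have hv : ∀ j, 0 ≤ v j := fun j => ite_nonneg (hr j) le_rfl
  have hsum_v : ∑ i, v i = ∑ i ∈ S, r i := by simp only [v, sum_ite_mem, univ_inter]
  have hsum_Pv : ∑ i, (P *ᵥ v) i ≤ Pmax * ∑ i ∈ S, r i := by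
    calc ∑ i, (P *ᵥ v) i = ∑ i, |(P *ᵥ v) i| :=
          sum_congr rfl fun i _ => (abs_of_nonneg (mulVec_nonneg_of_nonneg hP hv i)).symm
      _ ≤ Pmax * ∑ i, |v i| := hPmax v hv
      _ = Pmax * ∑ i ∈ S, r i := by simp only [abs_of_nonneg (hv _), hsum_v]
  have hsum_rest : ∑ i, (if i ∈ S then 0 else r i) = ∑ i, r i - ∑ i ∈ S, r i := by
    rw [eq_sub_iff_add_eq, ← hsum_v, ← sum_add_distrib]
    exact sum_congr rfl fun i _ => by simp only [v]; split_ifs <;> simp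
  simp only [localGDStep_apply, sum_add_distrib, ← mul_sum, hsum_rest]
  linarith [mul_le_mul_of_nonneg_left hsum_Pv hβ]

end LocalGD

/-- Iteration bound of LocalGD: if the process runs to time `T` with `r^{(T)} ≠ 0`
and average active ratio `γ̄_T = (1/T) Σ_{t<T} γ_t > 0`, where
`γ_t = ‖r_{S_t}^{(t)}‖₁ / ‖r^{(t)}‖₁`, then
`T ≤ (1/(γ̄_T (1 - β P_max))) · ln(‖r^{(0)}‖₁ / ‖r^{(T)}‖₁)`. -/
theorem localGD_iteration_bound (n : ℕ) (P : Matrix (Fin n) (Fin n) ℝ)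
    (hP : ∀ i j, 0 ≤ P i j) (β : ℝ) (hβ : 0 ≤ β)
    (Pmax : ℝ)
    (hPmax : ∀ v : Fin n → ℝ, (∀ i, 0 ≤ v i) →
      ∑ i, |(P *ᵥ v) i| ≤ Pmax * ∑ i, |v i|)
    (hβP : β * Pmax < 1)
    (r : ℕ → Fin n → ℝ) (hr0 : ∀ i, 0 ≤ r 0 i)
    (S : ℕ → Finset (Fin n))
    (hrec : ∀ t, r (t + 1) =
      r t - (1 - β • P) *ᵥ (fun i => if i ∈ S t then r t i else 0))
    (T : ℕ) (hT : r T ≠ 0)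
    (γbar : ℝ)
    (hγ : γbar = (1 / (T : ℝ)) *
      ∑ t ∈ Finset.range T, (∑ i ∈ S t, |r t i|) / (∑ i, |r t i|))
    (hγpos : 0 < γbar) :
    (T : ℝ) ≤ (1 / (γbar * (1 - β * Pmax))) *
      Real.log ((∑ i, |r 0 i|) / (∑ i, |r T i|)) := by
  set c := 1 - β * Pmax
  have hc : 0 < c := by linarith
  have hnonneg : ∀ t i, 0 ≤ r t i := by
    intro t
    induction t with
    | zero => exact hr0
    | succ t ih => rw [hrec t]; exact localGDStep_nonneg hP hβ ih
  simp only [fun t i => abs_of_nonneg (hnonneg t i)] at hγ ⊢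
  set N : ℕ → ℝ := fun t => ∑ i, r t i
  set A : ℕ → ℝ := fun t => ∑ i ∈ S t, r t i
  have hdecay : ∀ t, N (t + 1) ≤ N t - c * A t := fun t => by
    simp only [N, hrec t]
    exact sum_localGDStep_le hP hβ hPmax (hnonneg t)
  have hanti : Antitone N := antitone_nat_of_succ_le fun t =>
    (hdecay t).trans (sub_le_self _ (mul_nonneg hc.le (sum_nonneg fun i _ => hnonneg t i)))
  have hNT : 0 < N T := Fintype.sum_pos (lt_of_le_of_ne (hnonneg T) (Ne.symm hT))
  have hN : ∀ t ≤ T, 0 < N t := fun t ht => hNT.trans_le (hanti ht)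
  have hT0 : (T : ℝ) ≠ 0 := by rintro hT0; simp [hT0] at hγ; linarith
  have hlog := sum_range_le_log_div_of_le_one_sub_mul (d := fun t => c * (A t / N t)) hN
    fun t ht => by
      rw [sub_mul, one_mul, mul_assoc, div_mul_cancel₀ _ (hN t ht.le).ne']
      exact hdecay t
  have hsum : ∑ t ∈ range T, A t / N t = T * γbar := by rw [hγ]; field_simp; rfl
  rw [← mul_sum, hsum] at hlog
  rw [one_div, ← div_eq_inv_mul, le_div_iff₀ (mul_pos hγpos hc)]
  linarith
end

section
/- For the PPR LocalGD process with active sets S_t = {u : r^{(t)}_u ≥ εα d_u}, the total volume Σ_{t=0}^{T-1} vol(S_t) is at most 1/(εα), where vol(S) = Σ_{u∈S} d_u, starting from r^{(0)} = α e_s. -/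
/-!
A step removes the active mass `r_S` and puts `(1 - α) A D⁻¹ r_S` back. Since `A D⁻¹` is
nonnegative and column-stochastic, residuals stay nonnegative and `‖r‖₁` drops by exactly
`α ‖r_S‖₁`. Telescoping from `‖r⁽⁰⁾‖₁ = α` gives `Σ_t ‖r⁽ᵗ⁾_{S_t}‖₁ ≤ 1`, and every active
vertex carries residual at least `εα d_u`, so `εα Σ_t vol(S_t) ≤ 1`.
-/

open Matrix

namespace LocalGD

variable {ι : Type*} [Fintype ι] [DecidableEq ι]

def step (Q : Matrix ι ι ℝ) (S : Finset ι) (r : ι → ℝ) : ι → ℝ :=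
  r - Q *ᵥ fun i => if i ∈ S then r i else 0

variable {M : Matrix ι ι ℝ} {α : ℝ}

theorem step_nonneg (hM : ∀ i j, 0 ≤ M i j) (hα1 : α ≤ 1) (S : Finset ι) {r : ι → ℝ}
    (hr : 0 ≤ r) : 0 ≤ step (1 - (1 - α) • M) S r := by
  intro i
  set x : ι → ℝ := fun i => if i ∈ S then r i else 0
  have hx : 0 ≤ x := fun j => by dsimp only [x]; split_ifs; exacts [hr j, le_rfl]
  have hxr : x i ≤ r i := by dsimp only [x]; split_ifs; exacts [le_rfl, hr i]
  have hMx : 0 ≤ (M *ᵥ x) i := Finset.sum_nonneg fun j _ => mul_nonneg (hM i j) (hx j)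
  have hstep : step (1 - (1 - α) • M) S r i = r i - x i + (1 - α) * (M *ᵥ x) i := by
    simp only [step, sub_mulVec, one_mulVec, smul_mulVec, Pi.sub_apply, Pi.smul_apply,
      smul_eq_mul, x]
    ring
  have hspread := mul_nonneg (sub_nonneg.2 hα1) hMx
  rw [Pi.zero_apply, hstep]
  linarith

theorem sum_step (hM : 1 ᵥ* M = 1) (S : Finset ι) (r : ι → ℝ) :
    ∑ i, step (1 - (1 - α) • M) S r i = ∑ i, r i - α * ∑ i ∈ S, r i := by
  have hcol : ∀ x : ι → ℝ, ∑ i, (M *ᵥ x) i = ∑ i, x i := fun x => by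
    rw [← one_dotProduct, dotProduct_mulVec, hM, one_dotProduct]
  simp only [step, sub_mulVec, one_mulVec, smul_mulVec, Pi.sub_apply, Pi.smul_apply,
    smul_eq_mul, Finset.sum_sub_distrib, ← Finset.mul_sum, hcol, Finset.sum_ite_mem,
    Finset.univ_inter]
  ring

variable {r : ℕ → ι → ℝ} {S : ℕ → Finset ι}

theorem iterate_nonneg (hM : ∀ i j, 0 ≤ M i j) (hα1 : α ≤ 1) (hr0 : 0 ≤ r 0)
    (hrec : ∀ t, r (t + 1) = step (1 - (1 - α) • M) (S t) (r t)) (t : ℕ) : 0 ≤ r t := by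
  induction t with
  | zero => exact hr0
  | succ t ih => exact hrec t ▸ step_nonneg hM hα1 (S t) ih

theorem mul_sum_active_le (hMnn : ∀ i j, 0 ≤ M i j) (hM : 1 ᵥ* M = 1) (hα1 : α ≤ 1)
    (hr0 : 0 ≤ r 0) (hrec : ∀ t, r (t + 1) = step (1 - (1 - α) • M) (S t) (r t)) (T : ℕ) :
    α * ∑ t ∈ Finset.range T, ∑ i ∈ S t, r t i ≤ ∑ i, r 0 i := by
  have htel : α * ∑ t ∈ Finset.range T, ∑ i ∈ S t, r t i = ∑ i, r 0 i - ∑ i, r T i := by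
    rw [Finset.mul_sum, ← Finset.sum_range_sub' (fun t => ∑ i, r t i)]
    refine Finset.sum_congr rfl fun t _ => ?_
    rw [hrec, sum_step hM]
    ring
  have hT : 0 ≤ ∑ i, r T i :=
    Finset.sum_nonneg fun i _ => iterate_nonneg hMnn hα1 hr0 hrec T i
  linarith

end LocalGD

namespace SimpleGraph

variable {V : Type*} [Fintype V] (G : SimpleGraph V) [DecidableRel G.Adj]

theorem degree_cast_ne_zero (hdeg : ∀ v, 0 < G.degree v) (v : V) : (G.degree v : ℝ) ≠ 0 :=
  Nat.cast_ne_zero.2 (hdeg v).ne'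

variable [DecidableEq V]

theorem inv_diagonal_degree (hdeg : ∀ v, 0 < G.degree v) :
    (diagonal fun v => (G.degree v : ℝ))⁻¹ = diagonal fun v => (G.degree v : ℝ)⁻¹ := by
  refine inv_eq_right_inv ?_
  rw [diagonal_mul_diagonal, ← diagonal_one]
  congr 1
  funext v
  exact mul_inv_cancel₀ (G.degree_cast_ne_zero hdeg v)

theorem adjMatrix_mul_inv_degree_nonneg (hdeg : ∀ v, 0 < G.degree v) (u v : V) :
    0 ≤ (G.adjMatrix ℝ * (diagonal fun v => (G.degree v : ℝ))⁻¹) u v := by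
  rw [inv_diagonal_degree G hdeg, mul_diagonal, adjMatrix_apply]
  split_ifs <;> positivity

theorem one_vecMul_adjMatrix_mul_inv_degree (hdeg : ∀ v, 0 < G.degree v) :
    1 ᵥ* (G.adjMatrix ℝ * (diagonal fun v => (G.degree v : ℝ))⁻¹) = 1 := by
  funext v
  rw [inv_diagonal_degree G hdeg, ← vecMul_vecMul, vecMul_diagonal, adjMatrix_vecMul_apply]
  simp [mul_inv_cancel₀ (G.degree_cast_ne_zero hdeg v)]

end SimpleGraph

theorem ppr_localGD_volume_bound_general (n : ℕ) (G : SimpleGraph (Fin n)) [DecidableRel G.Adj]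
    (hdeg : ∀ v, 0 < G.degree v) (α ε : ℝ) (hα : 0 < α) (hα1 : α < 1)
    (hε : 0 < ε) (s : Fin n)
    (e : Fin n → Fin n → ℝ) (he : ∀ i, e i = Pi.single i 1)
    (Q : Matrix (Fin n) (Fin n) ℝ)
    (hQ : Q = 1 - (1 - α) •
      (G.adjMatrix ℝ * (Matrix.diagonal fun v => (G.degree v : ℝ))⁻¹))
    (r : ℕ → Fin n → ℝ) (hr0 : r 0 = α • e s)
    (S : ℕ → Finset (Fin n))
    (hS : ∀ t, S t = Finset.univ.filter (fun u => ε * α * (G.degree u : ℝ) ≤ r t u))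
    (hrec : ∀ t, r (t + 1) =
      r t - Q *ᵥ (fun i => if i ∈ S t then r t i else 0))
    (T : ℕ) :
    ∑ t ∈ Finset.range T, ∑ u ∈ S t, (G.degree u : ℝ) ≤ 1 / (ε * α) := by
  subst hQ
  have hεα : 0 < ε * α := mul_pos hε hα
  have hr0_nonneg : 0 ≤ r 0 := by
    rw [hr0, he]
    exact smul_nonneg hα.le (Pi.single_nonneg.2 zero_le_one)
  have hr0_sum : ∑ i, r 0 i = α := by simp [hr0, he, Pi.single_apply]
  have hactive : ∑ t ∈ Finset.range T, ∑ u ∈ S t, r t u ≤ 1 := by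
    have h := LocalGD.mul_sum_active_le (G.adjMatrix_mul_inv_degree_nonneg hdeg)
      (G.one_vecMul_adjMatrix_mul_inv_degree hdeg) hα1.le hr0_nonneg hrec T
    rw [hr0_sum] at h
    exact (mul_le_iff_le_one_right hα).1 h
  have hvol : ε * α * ∑ t ∈ Finset.range T, ∑ u ∈ S t, (G.degree u : ℝ)
      ≤ ∑ t ∈ Finset.range T, ∑ u ∈ S t, r t u := by
    simp only [Finset.mul_sum]
    refine Finset.sum_le_sum fun t _ => Finset.sum_le_sum fun u hu => ?_
    rw [hS t] at hu
    exact (Finset.mem_filter.1 hu).2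
  rw [le_div_iff₀' hεα]
  exact hvol.trans hactive

/-- Sublinear total volume of the PPR LocalGD process: with active sets
`S_t = {u : r^{(t)}_u ≥ εα d_u}`, iteration `r^{(t+1)} = r^{(t)} - Q r_{S_t}^{(t)}`
with `Q = I - (1-α) A D⁻¹`, starting from `r^{(0)} = α e_s`, the total volume
`Σ_{t<T} vol(S_t)` is at most `1/(εα)`. -/
theorem ppr_localGD_volume_bound (n : ℕ) (G : SimpleGraph (Fin n)) [DecidableRel G.Adj]
    (hdeg : ∀ v, 0 < G.degree v) (α ε : ℝ) (hα : 0 < α) (hα1 : α < 1)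
    (hε : 0 < ε) (hε1 : ε < 1) (s : Fin n)
    (e : Fin n → Fin n → ℝ) (he : ∀ i, e i = Pi.single i 1)
    (Q : Matrix (Fin n) (Fin n) ℝ)
    (hQ : Q = 1 - (1 - α) •
      (G.adjMatrix ℝ * (Matrix.diagonal fun v => (G.degree v : ℝ))⁻¹))
    (r : ℕ → Fin n → ℝ) (hr0 : r 0 = α • e s)
    (S : ℕ → Finset (Fin n))
    (hS : ∀ t, S t = Finset.univ.filter (fun u => ε * α * (G.degree u : ℝ) ≤ r t u))
    (hrec : ∀ t, r (t + 1) =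
      r t - Q *ᵥ (fun i => if i ∈ S t then r t i else 0))
    (T : ℕ) :
    ∑ t ∈ Finset.range T, ∑ u ∈ S t, (G.degree u : ℝ) ≤ 1 / (ε * α) :=
  ppr_localGD_volume_bound_general n G hdeg α ε hα hα1 hε s e he Q hQ r hr0 S hS hrec T
end

section
/- Let G be an undirected graph with maximum degree d_max and α ∈ (0, 1/d_max). For the Katz LocalSOR process with active sets S_t = {u : r_u ≥ ε d_u}, starting from r^{(0)} = e_s, the total volume Σ_{t=0}^{T-1} vol(S_t) is bounded by 1/(ε(1 − α d_max)). -/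
open Matrix

/-- Sublinear total volume of the Katz LocalSOR process: performing sequential
coordinate pushes `r ← r - r_u e_u + α r_u A e_u` at active nodes `u` (those with
`r_u ≥ ε d_u`), starting from `r^{(0)} = e_s`, the total pushed volume
(the sum of degrees of the pushed active nodes) is at most `1/(ε(1 - α d_max))`. -/
theorem katz_localSOR_volume_bound (n : ℕ) (G : SimpleGraph (Fin n)) [DecidableRel G.Adj]
    (α ε : ℝ) (hα : 0 < α) (hαd : α < 1 / (G.maxDegree : ℝ)) (hε : 0 < ε)
    (s : Fin n) (K : ℕ)
    (e : Fin n → Fin n → ℝ) (he : ∀ i, e i = Pi.single i 1)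
    (r : ℕ → Fin n → ℝ) (hr0 : r 0 = e s)
    (u : ℕ → Fin n)
    (hactive : ∀ k < K, ε * (G.degree (u k) : ℝ) ≤ r k (u k))
    (hrec : ∀ k < K, r (k + 1) = r k - r k (u k) • e (u k) +
      (α * r k (u k)) • (G.adjMatrix ℝ *ᵥ e (u k))) :
    ∑ k ∈ Finset.range K, (G.degree (u k) : ℝ) ≤
      1 / (ε * (1 - α * (G.maxDegree : ℝ))) := by
  set D : ℝ := (G.maxDegree : ℝ) with hDdef
  have hD0 : 0 < D := by
    rcases Nat.eq_zero_or_pos G.maxDegree with h | h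
    · exfalso
      rw [hDdef, h] at hαd
      simp at hαd
      linarith
    · rw [hDdef]; exact_mod_cast h
  have hαD : α * D < 1 := (lt_div_iff₀ hD0).mp hαd
  have hc : 0 < 1 - α * D := by linarith
  -- entrywise nonnegativity
  have hAnn : ∀ (i j : Fin n), (0:ℝ) ≤ G.adjMatrix ℝ i j := by
    intro i j
    rw [SimpleGraph.adjMatrix_apply]
    split <;> norm_num
  have hnn : ∀ k, k ≤ K → ∀ i, 0 ≤ r k i := by
    intro k
    induction k with
    | zero =>
      intro _ i
      rw [hr0, he]
      rcases eq_or_ne i s with h | h <;> simp [Pi.single_apply, h]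
    | succ k ih =>
      intro hk i
      have hk' : k < K := Nat.lt_of_succ_le hk
      have ihk := ih (Nat.le_of_lt hk')
      rw [hrec k hk']
      simp only [Pi.add_apply, Pi.sub_apply, Pi.smul_apply, smul_eq_mul]
      have h1 : 0 ≤ r k i - r k (u k) * e (u k) i := by
        rw [he]
        rcases eq_or_ne i (u k) with h | h
        · simp [h, Pi.single_apply]
        · simp [Pi.single_apply, h]
          exact ihk i
      have h2 : 0 ≤ α * r k (u k) * (G.adjMatrix ℝ *ᵥ e (u k)) i := by
        apply mul_nonneg (mul_nonneg hα.le (ihk _))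
        rw [mulVec, dotProduct]
        apply Finset.sum_nonneg
        intro j _
        apply mul_nonneg (hAnn i j)
        rw [he]
        rcases eq_or_ne j (u k) with h | h <;> simp [Pi.single_apply, h]
      linarith
  -- sums
  have hsum_e : ∀ v, ∑ i, e v i = 1 := by
    intro v; rw [he]; simp
  have hsum_A : ∀ v, ∑ i, (G.adjMatrix ℝ *ᵥ e v) i = (G.degree v : ℝ) := by
    intro v
    have : ∀ i, (G.adjMatrix ℝ *ᵥ e v) i = G.adjMatrix ℝ v i := by
      intro i
      rw [mulVec, dotProduct, he]
      rw [Finset.sum_eq_single v]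
      · simp only [SimpleGraph.adjMatrix_apply, Pi.single_eq_same, mul_one]
        exact if_congr (G.adj_comm i v) rfl rfl
      · intro b _ hb; simp [Pi.single_apply, hb]
      · simp
    rw [Finset.sum_congr rfl (fun i _ => this i)]
    rw [Finset.sum_congr rfl (fun i _ => SimpleGraph.adjMatrix_apply G v i)]
    rw [Finset.sum_boole]
    simp [SimpleGraph.degree, SimpleGraph.neighborFinset_eq_filter]
  -- per-step decrease
  have hstep : ∀ k < K,
      (∑ i, r (k+1) i) ≤ (∑ i, r k i) - ε * (1 - α * D) * (G.degree (u k) : ℝ) := by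
    intro k hk
    have hdle : (G.degree (u k) : ℝ) ≤ D := by
      rw [hDdef]; exact_mod_cast G.degree_le_maxDegree (u k)
    have hru : ε * (G.degree (u k) : ℝ) ≤ r k (u k) := hactive k hk
    have hd0 : (0:ℝ) ≤ (G.degree (u k) : ℝ) := Nat.cast_nonneg _
    have hrnn : 0 ≤ r k (u k) := le_trans (mul_nonneg hε.le hd0) hru
    have heq : (∑ i, r (k+1) i) =
        (∑ i, r k i) - r k (u k) + α * r k (u k) * (G.degree (u k) : ℝ) := by
      rw [hrec k hk]
      simp only [Pi.add_apply, Pi.sub_apply, Pi.smul_apply, smul_eq_mul]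
      rw [Finset.sum_add_distrib, Finset.sum_sub_distrib, ← Finset.mul_sum,
        ← Finset.mul_sum, hsum_e, hsum_A, mul_one]
    rw [heq]
    have key : ε * (1 - α * D) * (G.degree (u k) : ℝ) ≤
        r k (u k) - α * r k (u k) * (G.degree (u k) : ℝ) := by
      have h1 : r k (u k) * (1 - α * (G.degree (u k) : ℝ)) ≥
          (ε * (G.degree (u k) : ℝ)) * (1 - α * D) := by
        have hc' : 1 - α * D ≤ 1 - α * (G.degree (u k) : ℝ) := by
          nlinarith
        calc (ε * (G.degree (u k) : ℝ)) * (1 - α * D)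
            ≤ r k (u k) * (1 - α * D) := by
              apply mul_le_mul_of_nonneg_right hru hc.le
          _ ≤ r k (u k) * (1 - α * (G.degree (u k) : ℝ)) := by
              apply mul_le_mul_of_nonneg_left hc' hrnn
      nlinarith
    linarith
  -- telescoping
  have htel : ∀ m, m ≤ K →
      ε * (1 - α * D) * (∑ k ∈ Finset.range m, (G.degree (u k) : ℝ)) + (∑ i, r m i) ≤ 1 := by
    intro m
    induction m with
    | zero =>
      intro _
      simp [hr0, hsum_e]
    | succ m ih =>
      intro hm
      have hm' : m < K := Nat.lt_of_succ_le hm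
      have := hstep m hm'
      have ihm := ih (Nat.le_of_lt hm')
      rw [Finset.sum_range_succ]
      nlinarith
  have hKfin := htel K le_rfl
  have hrKnn : 0 ≤ ∑ i, r K i := Finset.sum_nonneg fun i _ => hnn K le_rfl i
  rw [le_div_iff₀ (by positivity)]
  nlinarith
end
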